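/- arXiv:0910.0987 — 2 statements merged into one kernel-verified Lean document; each statement's English description precedes it below -/
import Mathlib

section
/- Symmetry identity for higher-order generalized Euler polynomials: for all n ≥ 0, all m ≥ 1, and all x, y, ∑_{j=0}^{n} C(n,j) w₂^j w₁^{n−j} E_{n−j,χ}^{(m)}(w₂ x) ∑_{k=0}^{j} C(j,k) T_{k,χ}(w₁ d − 1) E_{j−k,χ}^{(m−1)}(w₁ y) = ∑_{j=0}^{n} C(n,j) w₁^j w₂^{n−j} E_{n−j,χ}^{(m)}(w₁ x) ∑_{k=0}^{j} C(j,k) T_{k,χ}(w₂ d − 1) E_{j−k,χ}^{(m−1)}(w₂ y). -/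
open PowerSeries Finset

/-- Generating function `2 ∑_{a<d} (-1)^a χ(a) e^{at} / (e^{dt}+1)` as a formal power series. -/
noncomputable def genEulerSeries (d : ℕ) (χ : DirichletCharacter ℂ d) : PowerSeries ℂ :=
  (2 * ∑ a ∈ Finset.range d, ((-1 : ℂ) ^ a * χ (a : ZMod d)) •
      PowerSeries.rescale (a : ℂ) (PowerSeries.exp ℂ)) *
    (PowerSeries.rescale (d : ℂ) (PowerSeries.exp ℂ) + 1)⁻¹

/-- Generalized higher-order Euler polynomial `E_{n,χ}^{(m)}(x)`: `n!` times the `n`-th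
coefficient of `(genEulerSeries d χ)^m * e^{xt}`. -/
noncomputable def genEuler (d : ℕ) (χ : DirichletCharacter ℂ d) (m n : ℕ) (x : ℂ) : ℂ :=
  (n.factorial : ℂ) *
    PowerSeries.coeff n ((genEulerSeries d χ) ^ m * PowerSeries.rescale x (PowerSeries.exp ℂ))

/-- Alternating power sum `T_{k,χ}(m) = ∑_{l=0}^{m} (-1)^l χ(l) l^k`. -/
noncomputable def altPowerSum (d : ℕ) (χ : DirichletCharacter ℂ d) (k m : ℕ) : ℂ :=
  ∑ l ∈ Finset.range (m + 1), (-1 : ℂ) ^ l * χ (l : ZMod d) * (l : ℂ) ^ k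

/-!
Let `G(t)` be the generating function, `A(t) = ∑_{a<d} (-1)^a χ(a) e^{at}` its numerator, and
`T_w(t) = ∑_{l<wd} (-1)^l χ(l) e^{lt}`, whose `k`-th exponential coefficient is `T_{k,χ}(wd - 1)`.
Splitting `l = jd + a` and using that `d` and `w` are odd,
`T_w(t) = A(t) (e^{wdt} + 1) / (e^{dt} + 1) = G(t) (e^{wdt} + 1) / 2`.
Hence `G(w₁t)^m e^{w₁w₂xt} · T_{w₁}(w₂t) G(w₂t)^{m-1} e^{w₁w₂yt}`, whose `n`-th exponential
coefficient is the left-hand side, equals `G(w₁t)^m G(w₂t)^m (e^{w₁w₂dt} + 1) e^{w₁w₂(x+y)t} / 2`,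
which is symmetric in `w₁` and `w₂`.
-/

section ExpSeries

variable {A : Type*} [CommRing A] [Algebra ℚ A]

noncomputable def expSeries (c : A) : A⟦X⟧ := rescale c (exp A)

lemma expSeries_mul_expSeries (a b : A) : expSeries a * expSeries b = expSeries (a + b) :=
  exp_mul_exp_eq_exp_add a b

lemma expSeries_zero : expSeries (0 : A) = 1 := by
  simp [expSeries]

lemma rescale_expSeries (a c : A) : rescale a (expSeries c) = expSeries (c * a) :=
  rescale_rescale _ _ _

lemma constantCoeff_expSeries (c : A) : constantCoeff (expSeries c) = 1 := by
  rw [expSeries, ← coeff_zero_eq_constantCoeff_apply, coeff_rescale]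
  simp

lemma expSeries_add_one_mul_alternating_sum (c : A) {w : ℕ} (hw : Odd w) :
    (expSeries c + 1) * ∑ j ∈ range w, (-1 : A) ^ j • expSeries (j * c) =
      expSeries (w * c) + 1 := by
  set f : ℕ → A⟦X⟧ := fun j => (-1 : A) ^ j • expSeries (j * c)
  have telescope : ∀ j, (expSeries c + 1) * f j = f j - f (j + 1) := by
    intro j
    have hshift : expSeries c * expSeries (j * c) = expSeries ((j + 1 : ℕ) * c) := by
      rw [expSeries_mul_expSeries]; push_cast; ring_nf
    simp only [f, mul_smul_comm, add_mul, one_mul, hshift, pow_succ]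
    module
  rw [mul_sum, sum_congr rfl fun j _ => telescope j, sum_range_sub' f w]
  simp [f, hw.neg_one_pow, expSeries_zero, add_comm]

end ExpSeries

lemma sum_range_mul_eq_sum_sum {M : Type*} [AddCommMonoid M] (f : ℕ → M) (w d : ℕ) :
    ∑ l ∈ range (w * d), f l = ∑ j ∈ range w, ∑ a ∈ range d, f (j * d + a) := by
  induction w with
  | zero => simp
  | succ w ih => rw [Nat.succ_mul, sum_range_add, ih, sum_range_succ]

lemma factorial_mul_coeff_mul {R : Type*} [CommSemiring R] (f g : R⟦X⟧) (n : ℕ) :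
    (n.factorial : R) * coeff n (f * g) =
      ∑ j ∈ range (n + 1), (n.choose j : R) *
        (((n - j).factorial : R) * coeff (n - j) f) * ((j.factorial : R) * coeff j g) := by
  rw [mul_comm f g, coeff_mul,
    Nat.sum_antidiagonal_eq_sum_range_succ (fun a b => coeff a g * coeff b f), mul_sum]
  refine sum_congr rfl fun j hj => ?_
  have hfact : (n.choose j : R) * (n - j).factorial * j.factorial = n.factorial := by
    rw_mod_cast [mul_right_comm, Nat.choose_mul_factorial_mul_factorial (mem_range_succ_iff.mp hj)]
  rw [← hfact]
  ring

section Character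

variable {d : ℕ} (χ : DirichletCharacter ℂ d)

noncomputable def charExpSum : ℂ⟦X⟧ :=
  ∑ a ∈ range d, ((-1 : ℂ) ^ a * χ a) • expSeries (a : ℂ)

noncomputable def altPowerSumSeries (w : ℕ) : ℂ⟦X⟧ :=
  ∑ l ∈ range (w * d), ((-1 : ℂ) ^ l * χ l) • expSeries (l : ℂ)

lemma factorial_mul_coeff_altPowerSumSeries {w : ℕ} (h : 0 < w * d) (k : ℕ) :
    (k.factorial : ℂ) * coeff k (altPowerSumSeries χ w) = altPowerSum d χ k (w * d - 1) := by
  have hk : (k.factorial : ℂ) ≠ 0 := Nat.cast_ne_zero.mpr k.factorial_ne_zero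
  rw [altPowerSum, Nat.sub_add_cancel h, altPowerSumSeries, map_sum, mul_sum]
  refine sum_congr rfl fun l _ => ?_
  simp only [expSeries, LinearMap.map_smul, coeff_rescale, coeff_exp, smul_eq_mul]
  push_cast
  field_simp

lemma altPowerSumSeries_eq_charExpSum_mul (hd : Odd d) (w : ℕ) :
    altPowerSumSeries χ w = charExpSum χ * ∑ j ∈ range w, (-1 : ℂ) ^ j • expSeries (j * d : ℂ) := by
  rw [charExpSum, sum_mul_sum, altPowerSumSeries,
    sum_range_mul_eq_sum_sum (fun l => ((-1 : ℂ) ^ l * χ l) • expSeries (l : ℂ)), sum_comm]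
  refine sum_congr rfl fun a _ => sum_congr rfl fun j _ => ?_
  have hχ : ((j * d + a : ℕ) : ZMod d) = a := by simp
  have hsign : (-1 : ℂ) ^ (j * d + a) = (-1) ^ a * (-1) ^ j := by
    rw [pow_add, pow_mul', hd.neg_one_pow, mul_comm]
  rw [hχ, hsign, smul_mul_smul_comm, expSeries_mul_expSeries]
  push_cast
  ring_nf

lemma genEulerSeries_mul_expSeries_add_one :
    genEulerSeries d χ * (expSeries (d : ℂ) + 1) = 2 * charExpSum χ := by
  have hunit : constantCoeff (expSeries (d : ℂ) + 1) ≠ 0 := by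
    simp [constantCoeff_expSeries]
  rw [show genEulerSeries d χ = 2 * charExpSum χ * (expSeries (d : ℂ) + 1)⁻¹ from rfl, mul_assoc,
    PowerSeries.inv_mul_cancel _ hunit, mul_one]

lemma two_mul_altPowerSumSeries (hd : Odd d) {w : ℕ} (hw : Odd w) :
    2 * altPowerSumSeries χ w = genEulerSeries d χ * (expSeries (w * d : ℂ) + 1) := by
  rw [altPowerSumSeries_eq_charExpSum_mul χ hd, ← expSeries_add_one_mul_alternating_sum _ hw,
    ← mul_assoc (genEulerSeries d χ), genEulerSeries_mul_expSeries_add_one, mul_assoc]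

end Character

section Symmetry

variable {d : ℕ} (χ : DirichletCharacter ℂ d)

noncomputable def symmetrySeries (m u v : ℕ) (x y : ℂ) : ℂ⟦X⟧ :=
  rescale (u : ℂ) (genEulerSeries d χ ^ m * expSeries ((v : ℂ) * x)) *
    rescale (v : ℂ)
      (altPowerSumSeries χ u * genEulerSeries d χ ^ (m - 1) * expSeries ((u : ℂ) * y))

lemma factorial_mul_coeff_symmetrySeries {u : ℕ} (hu : 0 < u * d) (m v n : ℕ) (x y : ℂ) :
    (n.factorial : ℂ) * coeff n (symmetrySeries χ m u v x y) =
      ∑ j ∈ range (n + 1), (n.choose j : ℂ) * (v : ℂ) ^ j * (u : ℂ) ^ (n - j) *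
        genEuler d χ m (n - j) ((v : ℂ) * x) *
        ∑ k ∈ range (j + 1), (j.choose k : ℂ) * altPowerSum d χ k (u * d - 1) *
          genEuler d χ (m - 1) (j - k) ((u : ℂ) * y) := by
  have inner : ∀ j, (j.factorial : ℂ) *
      coeff j (altPowerSumSeries χ u * genEulerSeries d χ ^ (m - 1) * expSeries ((u : ℂ) * y)) =
        ∑ k ∈ range (j + 1), (j.choose k : ℂ) * altPowerSum d χ k (u * d - 1) *
          genEuler d χ (m - 1) (j - k) ((u : ℂ) * y) := by
    intro j
    rw [mul_rotate, factorial_mul_coeff_mul]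
    refine sum_congr rfl fun k _ => ?_
    rw [factorial_mul_coeff_altPowerSumSeries χ hu]
    simp only [genEuler, expSeries]
    ring
  rw [symmetrySeries, factorial_mul_coeff_mul]
  refine sum_congr rfl fun j _ => ?_
  rw [coeff_rescale, coeff_rescale, ← inner]
  simp only [genEuler, expSeries]
  ring

lemma two_mul_symmetrySeries (hd : Odd d) {u : ℕ} (hu : Odd u) {m : ℕ} (hm : 1 ≤ m) (v : ℕ)
    (x y : ℂ) :
    2 * symmetrySeries χ m u v x y =
      rescale (u : ℂ) (genEulerSeries d χ) ^ m * rescale (v : ℂ) (genEulerSeries d χ) ^ m *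
        (expSeries ((u * v * d : ℕ) : ℂ) + 1) * expSeries ((u * v : ℕ) * (x + y)) := by
  obtain ⟨k, rfl⟩ := Nat.exists_eq_add_of_le' hm
  have hT : 2 * rescale (v : ℂ) (altPowerSumSeries χ u) =
      rescale (v : ℂ) (genEulerSeries d χ) * (expSeries ((u * v * d : ℕ) : ℂ) + 1) := by
    rw [← map_ofNat (rescale (v : ℂ)) 2, ← map_mul, two_mul_altPowerSumSeries χ hd hu, map_mul,
      map_add, map_one, rescale_expSeries]
    push_cast
    ring_nf
  simp only [symmetrySeries, map_mul, map_pow, rescale_expSeries, add_tsub_cancel_right]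
  calc _ = rescale (u : ℂ) (genEulerSeries d χ) ^ (k + 1) *
        rescale (v : ℂ) (genEulerSeries d χ) ^ k * (2 * rescale (v : ℂ) (altPowerSumSeries χ u)) *
        (expSeries ((v : ℂ) * x * u) * expSeries ((u : ℂ) * y * v)) := by ring
    _ = _ := by
      rw [hT, expSeries_mul_expSeries]
      push_cast
      ring_nf

lemma symmetrySeries_comm (hd : Odd d) {u v : ℕ} (hu : Odd u) (hv : Odd v) {m : ℕ} (hm : 1 ≤ m)
    (x y : ℂ) :
    symmetrySeries χ m u v x y = symmetrySeries χ m v u x y := by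
  have : CharZero ℂ⟦X⟧ := RingHom.charZero constantCoeff
  apply mul_left_cancel₀ (two_ne_zero : (2 : ℂ⟦X⟧) ≠ 0)
  rw [two_mul_symmetrySeries χ hd hu hm, two_mul_symmetrySeries χ hd hv hm, mul_comm u v]
  ring

end Symmetry

theorem symmetry_higher_order_general (d : ℕ) (hd : Odd d)
    (χ : DirichletCharacter ℂ d) (w₁ w₂ : ℕ) (hw₁ : Odd w₁)
    (hw₂ : Odd w₂) (n m : ℕ) (hm : 1 ≤ m) (x y : ℂ) :
    ∑ j ∈ Finset.range (n + 1), (n.choose j : ℂ) * (w₂ : ℂ) ^ j * (w₁ : ℂ) ^ (n - j) *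
        genEuler d χ m (n - j) ((w₂ : ℂ) * x) *
        ∑ k ∈ Finset.range (j + 1), (j.choose k : ℂ) * altPowerSum d χ k (w₁ * d - 1) *
          genEuler d χ (m - 1) (j - k) ((w₁ : ℂ) * y) =
      ∑ j ∈ Finset.range (n + 1), (n.choose j : ℂ) * (w₁ : ℂ) ^ j * (w₂ : ℂ) ^ (n - j) *
        genEuler d χ m (n - j) ((w₁ : ℂ) * x) *
        ∑ k ∈ Finset.range (j + 1), (j.choose k : ℂ) * altPowerSum d χ k (w₂ * d - 1) *
          genEuler d χ (m - 1) (j - k) ((w₂ : ℂ) * y) := by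
  rw [← factorial_mul_coeff_symmetrySeries χ (Nat.mul_pos hw₁.pos hd.pos),
    ← factorial_mul_coeff_symmetrySeries χ (Nat.mul_pos hw₂.pos hd.pos),
    symmetrySeries_comm χ hd hw₁ hw₂ hm]

theorem symmetry_higher_order (d : ℕ) (hd : Odd d) (hd0 : 0 < d)
    (χ : DirichletCharacter ℂ d) (w₁ w₂ : ℕ) (hw₁ : Odd w₁) (hw₁0 : 0 < w₁)
    (hw₂ : Odd w₂) (hw₂0 : 0 < w₂) (n m : ℕ) (hm : 1 ≤ m) (x y : ℂ) :
    ∑ j ∈ Finset.range (n + 1), (n.choose j : ℂ) * (w₂ : ℂ) ^ j * (w₁ : ℂ) ^ (n - j) *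
        genEuler d χ m (n - j) ((w₂ : ℂ) * x) *
        ∑ k ∈ Finset.range (j + 1), (j.choose k : ℂ) * altPowerSum d χ k (w₁ * d - 1) *
          genEuler d χ (m - 1) (j - k) ((w₁ : ℂ) * y) =
      ∑ j ∈ Finset.range (n + 1), (n.choose j : ℂ) * (w₁ : ℂ) ^ j * (w₂ : ℂ) ^ (n - j) *
        genEuler d χ m (n - j) ((w₁ : ℂ) * x) *
        ∑ k ∈ Finset.range (j + 1), (j.choose k : ℂ) * altPowerSum d χ k (w₂ * d - 1) *
          genEuler d χ (m - 1) (j - k) ((w₂ : ℂ) * y) :=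
  symmetry_higher_order_general d hd χ w₁ w₂ hw₁ hw₂ n m hm x y
end

section
/- Multiplication-type symmetry for generalized Euler polynomials: for all n ≥ 0 and all x, w₁^n ∑_{i=0}^{w₁ d − 1} (−1)^i χ(i) E_{n,χ}(w₂ x + (w₂/w₁) i) = w₂^n ∑_{i=0}^{w₂ d − 1} (−1)^i χ(i) E_{n,χ}(w₁ x + (w₁/w₂) i). -/
/-!
Put `s i = (-1)^i χ(i)`, `P_N(y) = ∑_{i<N} s i y^i` and `q = e^t`. By definition the generating
function satisfies `F(t) (q^d + 1) = 2 P_d(q)`. As `d` is odd, `s` is antiperiodic with antiperiod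
`d`, so for odd `w` the alternating geometric sum gives `P_{wd}(y) (y^d + 1) = P_d(y) (y^{wd} + 1)`.
Hence `F(w₁t) P_{w₁d}(q^{w₂}) (q^{w₁d} + 1) (q^{w₂d} + 1) = 2 P_d(q^{w₁}) P_d(q^{w₂}) (q^{w₁w₂d} + 1)`
is symmetric in `w₁, w₂`. Multiplying by `e^{w₁w₂xt}` and reading off the `n`-th coefficient
gives both sides of the identity.
-/

open PowerSeries Finset

theorem Function.Antiperiodic.nat_mul_add_eq {α β : Type*} [Semiring α] [Ring β] {f : α → β}
    {c : α} (h : Function.Antiperiodic f c) (n : ℕ) (x : α) : f (n * c + x) = (-1) ^ n * f x := by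
  induction n with
  | zero => simp
  | succ n ih =>
    rw [Nat.cast_succ, add_one_mul, add_right_comm, h, ih, pow_succ', neg_one_mul, neg_mul]

theorem Odd.geom_sum_neg_mul_add_one {R : Type*} [CommRing R] {w : ℕ} (hw : Odd w) (q : R) :
    (∑ j ∈ range w, (-q) ^ j) * (q + 1) = q ^ w + 1 := by
  have h := geom_sum_mul (-q) w
  rw [hw.neg_pow] at h
  linear_combination -h

theorem DirichletCharacter.antiperiodic_neg_one_pow_mul {S : Type*} [CommRing S] {d : ℕ}
    (χ : DirichletCharacter S d) (hd : _root_.Odd d) :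
    Function.Antiperiodic (fun i : ℕ => (-1 : S) ^ i * χ i) d := by
  intro i
  simp only [pow_add, hd.neg_one_pow, Nat.cast_add, ZMod.natCast_self, add_zero]
  ring

section WeightedPowerSum

variable {S R : Type*} [CommRing S] [CommRing R] [Algebra S R]

def weightedPowerSum (s : ℕ → S) (N : ℕ) (y : R) : R :=
  ∑ i ∈ range N, s i • y ^ i

theorem AlgHom.map_weightedPowerSum {R' : Type*} [CommRing R'] [Algebra S R'] (g : R →ₐ[S] R')
    (s : ℕ → S) (N : ℕ) (y : R) : g (weightedPowerSum s N y) = weightedPowerSum s N (g y) := by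
  simp only [weightedPowerSum, map_sum, map_smul, map_pow]

theorem Function.Antiperiodic.weightedPowerSum_nat_mul_eq {s : ℕ → S} {d : ℕ}
    (hs : Function.Antiperiodic s d) (w : ℕ) (y : R) :
    weightedPowerSum s (w * d) y = weightedPowerSum s d y * ∑ j ∈ range w, (-y ^ d) ^ j := by
  induction w with
  | zero => simp [weightedPowerSum]
  | succ w ih =>
    have hblock (a : ℕ) : s (w * d + a) • y ^ (w * d + a) = (s a • y ^ a) * (-y ^ d) ^ w := by
      have := hs.nat_mul_add_eq w a
      push_cast at this
      simp only [this, Algebra.smul_def, map_mul, map_pow, map_neg, map_one]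
      ring
    rw [add_one_mul, weightedPowerSum, sum_range_add, ← weightedPowerSum, ih, sum_range_succ,
      mul_add]
    congr 1
    rw [weightedPowerSum, sum_mul]
    exact sum_congr rfl fun a _ => hblock a

theorem Function.Antiperiodic.weightedPowerSum_mul_pow_add_one {s : ℕ → S} {d w : ℕ}
    (hs : Function.Antiperiodic s d) (hw : Odd w) (y : R) :
    weightedPowerSum s (w * d) y * (y ^ d + 1) = weightedPowerSum s d y * ((y ^ d) ^ w + 1) := by
  rw [hs.weightedPowerSum_nat_mul_eq, mul_assoc, hw.geom_sum_neg_mul_add_one]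

theorem Function.Antiperiodic.mul_weightedPowerSum_symm [IsDomain R] {s : ℕ → S} {d w₁ w₂ : ℕ}
    (hs : Function.Antiperiodic s d) (hw₁ : Odd w₁) (hw₂ : Odd w₂) {q c F₁ F₂ : R}
    (hq₁ : (q ^ w₁) ^ d + 1 ≠ 0) (hq₂ : (q ^ w₂) ^ d + 1 ≠ 0)
    (hF₁ : F₁ * ((q ^ w₁) ^ d + 1) = c * weightedPowerSum s d (q ^ w₁))
    (hF₂ : F₂ * ((q ^ w₂) ^ d + 1) = c * weightedPowerSum s d (q ^ w₂)) :
    F₁ * weightedPowerSum s (w₁ * d) (q ^ w₂) = F₂ * weightedPowerSum s (w₂ * d) (q ^ w₁) := by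
  refine mul_right_cancel₀ (mul_ne_zero hq₁ hq₂) ?_
  have h₁ := hs.weightedPowerSum_mul_pow_add_one hw₁ (q ^ w₂)
  have h₂ := hs.weightedPowerSum_mul_pow_add_one hw₂ (q ^ w₁)
  have hpow : ((q ^ w₂) ^ d) ^ w₁ = ((q ^ w₁) ^ d) ^ w₂ := by ring
  rw [hpow] at h₁
  linear_combination (weightedPowerSum s (w₁ * d) (q ^ w₂) * ((q ^ w₂) ^ d + 1)) * hF₁
    + c * weightedPowerSum s d (q ^ w₁) * h₁
    - (weightedPowerSum s (w₂ * d) (q ^ w₁) * ((q ^ w₁) ^ d + 1)) * hF₂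
    - c * weightedPowerSum s d (q ^ w₂) * h₂

end WeightedPowerSum

theorem PowerSeries.exp_pow_add_one_ne_zero {K : Type*} [Field K] [CharZero K] (k : ℕ) :
    exp K ^ k + 1 ≠ 0 := by
  intro h
  simpa [one_add_one_eq_two] using congrArg constantCoeff h

section GenEuler

variable {d : ℕ} (χ : DirichletCharacter ℂ d)

theorem genEulerSeries_mul_exp_pow_add_one :
    genEulerSeries d χ * (exp ℂ ^ d + 1) =
      2 * weightedPowerSum (fun a : ℕ => (-1 : ℂ) ^ a * χ a) d (exp ℂ) := by
  have hunit : constantCoeff (rescale (d : ℂ) (exp ℂ) + 1) ≠ 0 := by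
    rw [← exp_pow_eq_rescale_exp]
    simp [one_add_one_eq_two]
  rw [genEulerSeries, exp_pow_eq_rescale_exp, mul_assoc, PowerSeries.inv_mul_cancel _ hunit,
    mul_one, weightedPowerSum]
  simp only [exp_pow_eq_rescale_exp]

theorem rescale_genEulerSeries_mul (w : ℕ) :
    rescale (w : ℂ) (genEulerSeries d χ) * ((exp ℂ ^ w) ^ d + 1) =
      2 * weightedPowerSum (fun a : ℕ => (-1 : ℂ) ^ a * χ a) d (exp ℂ ^ w) := by
  have h := congrArg (rescaleAlgHom (w : ℂ)) (genEulerSeries_mul_exp_pow_add_one χ)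
  have hcoe (f : ℂ⟦X⟧) : rescaleAlgHom (w : ℂ) f = rescale (w : ℂ) f :=
    DFunLike.congr_fun (coe_rescaleAlgHom _) f
  rwa [map_mul, map_mul, AlgHom.map_weightedPowerSum, map_add, map_pow, map_one, map_ofNat, hcoe,
    hcoe, ← exp_pow_eq_rescale_exp] at h

theorem pow_mul_genEuler (n : ℕ) (w y : ℂ) :
    w ^ n * genEuler d χ 1 n y =
      n.factorial * coeff n (rescale w (genEulerSeries d χ) * rescale (y * w) (exp ℂ)) := by
  rw [genEuler, pow_one, ← rescale_rescale, ← map_mul, coeff_rescale]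
  ring

theorem pow_mul_sum_genEuler (s : ℕ → ℂ) (N n v : ℕ) {w : ℂ} (hw : w ≠ 0) (x : ℂ) :
    w ^ n * ∑ i ∈ range N, s i * genEuler d χ 1 n (v * x + v / w * i) =
      n.factorial * coeff n (rescale (w * v * x) (exp ℂ) *
        (rescale w (genEulerSeries d χ) * weightedPowerSum s N (exp ℂ ^ v))) := by
  have hexp (i : ℕ) : rescale ((v * x + v / w * i) * w) (exp ℂ) =
      rescale (w * v * x) (exp ℂ) * (exp ℂ ^ v) ^ i := by
    rw [← pow_mul, exp_pow_eq_rescale_exp, exp_mul_exp_eq_exp_add]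
    congr 1
    push_cast
    field_simp
  simp only [weightedPowerSum, mul_sum, map_sum, mul_left_comm _ (s _), pow_mul_genEuler, hexp,
    mul_smul_comm, LinearMap.map_smul_of_tower, smul_eq_mul]
  refine sum_congr rfl fun i _ => ?_
  ring_nf

end GenEuler

theorem multiplication_symmetry_general (d : ℕ) (hd : Odd d)
    (χ : DirichletCharacter ℂ d) (w₁ w₂ : ℕ) (hw₁ : Odd w₁)
    (hw₂ : Odd w₂) (n : ℕ) (x : ℂ) :
    (w₁ : ℂ) ^ n * ∑ i ∈ Finset.range (w₁ * d), (-1 : ℂ) ^ i * χ (i : ZMod d) *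
        genEuler d χ 1 n ((w₂ : ℂ) * x + ((w₂ : ℂ) / (w₁ : ℂ)) * i) =
      (w₂ : ℂ) ^ n * ∑ i ∈ Finset.range (w₂ * d), (-1 : ℂ) ^ i * χ (i : ZMod d) *
        genEuler d χ 1 n ((w₁ : ℂ) * x + ((w₁ : ℂ) / (w₂ : ℂ)) * i) := by
  have hexp_ne (w : ℕ) : (exp ℂ ^ w) ^ d + 1 ≠ 0 := by
    rw [← pow_mul]
    exact exp_pow_add_one_ne_zero _
  have hw₁0 : (w₁ : ℂ) ≠ 0 := by exact_mod_cast hw₁.pos.ne'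
  have hw₂0 : (w₂ : ℂ) ≠ 0 := by exact_mod_cast hw₂.pos.ne'
  rw [pow_mul_sum_genEuler χ (fun i : ℕ => (-1 : ℂ) ^ i * χ i) _ n w₂ hw₁0,
    pow_mul_sum_genEuler χ (fun i : ℕ => (-1 : ℂ) ^ i * χ i) _ n w₁ hw₂0, mul_comm (w₂ : ℂ) w₁,
    (χ.antiperiodic_neg_one_pow_mul hd).mul_weightedPowerSum_symm hw₁ hw₂ (hexp_ne w₁)
      (hexp_ne w₂) (rescale_genEulerSeries_mul χ w₁) (rescale_genEulerSeries_mul χ w₂)]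

theorem multiplication_symmetry (d : ℕ) (hd : Odd d) (hd0 : 0 < d)
    (χ : DirichletCharacter ℂ d) (w₁ w₂ : ℕ) (hw₁ : Odd w₁) (hw₁0 : 0 < w₁)
    (hw₂ : Odd w₂) (hw₂0 : 0 < w₂) (n : ℕ) (x : ℂ) :
    (w₁ : ℂ) ^ n * ∑ i ∈ Finset.range (w₁ * d), (-1 : ℂ) ^ i * χ (i : ZMod d) *
        genEuler d χ 1 n ((w₂ : ℂ) * x + ((w₂ : ℂ) / (w₁ : ℂ)) * i) =
      (w₂ : ℂ) ^ n * ∑ i ∈ Finset.range (w₂ * d), (-1 : ℂ) ^ i * χ (i : ZMod d) *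
        genEuler d χ 1 n ((w₁ : ℂ) * x + ((w₁ : ℂ) / (w₂ : ℂ)) * i) :=
  multiplication_symmetry_general d hd χ w₁ w₂ hw₁ hw₂ n x
end
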